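/- arXiv:1506.06266 — 2 statements merged into one kernel-verified Lean document; each statement's English description precedes it below -/
import Mathlib

section
/- Let F̄_{σ²}^{[a,b]}(x) = (Φ(b/σ) − Φ(x/σ))/(Φ(b/σ) − Φ(a/σ)) denote the survival function of a N(0, σ²) random variable truncated to [a, b], where 0 ≤ a < b. Then for any 0 < σ₁² < σ₂² and any x with a < x < b, F̄_{σ₁²}^{[a,b]}(x) < F̄_{σ₂²}^{[a,b]}(x); i.e., the truncated Gaussian survival function is strictly increasing in the variance parameter when the truncation interval lies to the right of zero. -/
open Real

noncomputable def stdNormalPDF (x : ℝ) : ℝ := Real.exp (-(x ^ 2) / 2) / Real.sqrt (2 * Real.pi)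

noncomputable def stdNormalCDF (x : ℝ) : ℝ := ∫ t in Set.Iic x, stdNormalPDF t

/-- Survival function of a `N(0, σ²)` random variable truncated to `[a, b]`. -/
noncomputable def truncGaussSurvival (σ a b x : ℝ) : ℝ :=
  (stdNormalCDF (b / σ) - stdNormalCDF (x / σ)) /
    (stdNormalCDF (b / σ) - stdNormalCDF (a / σ))

/-!
Up to the common factor `σ⁻¹`, the truncated survival function is the share
`∫ₓᵇ φ(t/σ) dt / ∫ₐᵇ φ(t/σ) dt` of the mass of `t ↦ φ(t/σ)` on `[a, b]` lying in `[x, b]`.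
The likelihood ratio `φ(t/σ₁) / φ(t/σ₂) = exp (-(σ₁⁻² - σ₂⁻²) t² / 2)` is strictly decreasing on
`[0, ∞) ⊇ [a, b]`. With `k` its value at `x`, the density with the smaller variance has more than
`k` times the mass of the other on `[a, x]` and less than `k` times it on `[x, b]`, so its share
of the mass lying in `[x, b]` is smaller.
-/

open MeasureTheory Set

lemma div_add_lt_div_add_of_mul_lt_of_lt_mul {A₁ B₁ A₂ B₂ k : ℝ} (hA₂ : 0 < A₂) (hB₂ : 0 < B₂)
    (hAB₁ : 0 < A₁ + B₁) (hA : k * A₂ < A₁) (hB : B₁ < k * B₂) :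
    B₁ / (A₁ + B₁) < B₂ / (A₂ + B₂) := by
  rw [div_lt_div_iff₀ hAB₁ (add_pos hA₂ hB₂)]
  nlinarith [mul_lt_mul_of_pos_right hB hA₂, mul_lt_mul_of_pos_right hA hB₂]

section LikelihoodRatio

variable {f g : ℝ → ℝ} {u v k : ℝ}

lemma integral_lt_mul_integral_of_div_lt (huv : u < v) (hf : IntervalIntegrable f volume u v)
    (hg : IntervalIntegrable g volume u v) (hg_pos : ∀ t ∈ Ioo u v, 0 < g t)
    (hfg : ∀ t ∈ Ioo u v, f t / g t < k) :
    ∫ t in u..v, f t < k * ∫ t in u..v, g t := by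
  rw [← intervalIntegral.integral_const_mul, ← sub_pos, ← intervalIntegral.integral_sub
    (hg.const_mul k) hf]
  refine intervalIntegral.intervalIntegral_pos_of_pos_on ((hg.const_mul k).sub hf)
    (fun t ht => ?_) huv
  have := (div_lt_iff₀ (hg_pos t ht)).1 (hfg t ht)
  linarith

lemma mul_integral_lt_integral_of_lt_div (huv : u < v) (hf : IntervalIntegrable f volume u v)
    (hg : IntervalIntegrable g volume u v) (hg_pos : ∀ t ∈ Ioo u v, 0 < g t)
    (hfg : ∀ t ∈ Ioo u v, k < f t / g t) :
    k * ∫ t in u..v, g t < ∫ t in u..v, f t := by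
  rw [← intervalIntegral.integral_const_mul, ← sub_pos, ← intervalIntegral.integral_sub
    hf (hg.const_mul k)]
  refine intervalIntegral.intervalIntegral_pos_of_pos_on (hf.sub (hg.const_mul k))
    (fun t ht => ?_) huv
  have := (lt_div_iff₀ (hg_pos t ht)).1 (hfg t ht)
  linarith

theorem integral_div_integral_lt_of_strictAntiOn_div {a b x : ℝ} (hx : x ∈ Ioo a b)
    (hf : IntervalIntegrable f volume a b) (hg : IntervalIntegrable g volume a b)
    (hf_pos : ∀ t ∈ Ioo a b, 0 < f t) (hg_pos : ∀ t ∈ Ioo a b, 0 < g t)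
    (hfg : StrictAntiOn (fun t => f t / g t) (Ioo a b)) :
    (∫ t in x..b, f t) / (∫ t in a..b, f t) < (∫ t in x..b, g t) / ∫ t in a..b, g t := by
  obtain ⟨hax, hxb⟩ := hx
  have hxI : x ∈ uIcc a b := mem_uIcc_of_le hax.le hxb.le
  have hf₁ := hf.mono_set (uIcc_subset_uIcc left_mem_uIcc hxI)
  have hf₂ := hf.mono_set (uIcc_subset_uIcc hxI right_mem_uIcc)
  have hg₁ := hg.mono_set (uIcc_subset_uIcc left_mem_uIcc hxI)
  have hg₂ := hg.mono_set (uIcc_subset_uIcc hxI right_mem_uIcc)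
  have left : Ioo a x ⊆ Ioo a b := Ioo_subset_Ioo_right hxb.le
  have right : Ioo x b ⊆ Ioo a b := Ioo_subset_Ioo_left hax.le
  have mass_left := mul_integral_lt_integral_of_lt_div (k := f x / g x) hax hf₁ hg₁
    (fun t ht => hg_pos t (left ht)) (fun t ht => hfg (left ht) ⟨hax, hxb⟩ ht.2)
  have mass_right := integral_lt_mul_integral_of_div_lt (k := f x / g x) hxb hf₂ hg₂
    (fun t ht => hg_pos t (right ht)) (fun t ht => hfg ⟨hax, hxb⟩ (right ht) ht.1)
  have hg_left : 0 < ∫ t in a..x, g t :=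
    intervalIntegral.intervalIntegral_pos_of_pos_on hg₁ (fun t ht => hg_pos t (left ht)) hax
  have hg_right : 0 < ∫ t in x..b, g t :=
    intervalIntegral.intervalIntegral_pos_of_pos_on hg₂ (fun t ht => hg_pos t (right ht)) hxb
  have hf_total : 0 < (∫ t in a..x, f t) + ∫ t in x..b, f t := by
    rw [intervalIntegral.integral_add_adjacent_intervals hf₁ hf₂]
    exact intervalIntegral.intervalIntegral_pos_of_pos_on hf hf_pos (hax.trans hxb)
  rw [← intervalIntegral.integral_add_adjacent_intervals hf₁ hf₂,
    ← intervalIntegral.integral_add_adjacent_intervals hg₁ hg₂]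
  exact div_add_lt_div_add_of_mul_lt_of_lt_mul hg_left hg_right hf_total mass_left mass_right

end LikelihoodRatio

lemma stdNormalPDF_pos (x : ℝ) : 0 < stdNormalPDF x := by
  unfold stdNormalPDF
  positivity

lemma continuous_stdNormalPDF : Continuous stdNormalPDF := by
  unfold stdNormalPDF
  fun_prop

lemma integrable_stdNormalPDF : Integrable stdNormalPDF := by
  convert (integrable_exp_neg_mul_sq (b := 1 / 2) (by norm_num)).div_const (√(2 * π)) using 2
  unfold stdNormalPDF
  ring_nf

lemma stdNormalCDF_sub_stdNormalCDF (u v : ℝ) :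
    stdNormalCDF u - stdNormalCDF v = ∫ t in v..u, stdNormalPDF t :=
  intervalIntegral.integral_Iic_sub_Iic integrable_stdNormalPDF.integrableOn
    integrable_stdNormalPDF.integrableOn

lemma truncGaussSurvival_eq_integral_div {σ : ℝ} (hσ : σ ≠ 0) (a b x : ℝ) :
    truncGaussSurvival σ a b x =
      (∫ t in x..b, stdNormalPDF (t / σ)) / ∫ t in a..b, stdNormalPDF (t / σ) := by
  rw [truncGaussSurvival, stdNormalCDF_sub_stdNormalCDF, stdNormalCDF_sub_stdNormalCDF,
    ← intervalIntegral.inv_mul_integral_comp_div, ← intervalIntegral.inv_mul_integral_comp_div,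
    mul_div_mul_left _ _ (inv_ne_zero hσ)]

lemma stdNormalPDF_div_div_stdNormalPDF_div {σ₁ σ₂ : ℝ} (hσ₁ : σ₁ ≠ 0) (hσ₂ : σ₂ ≠ 0) (t : ℝ) :
    stdNormalPDF (t / σ₁) / stdNormalPDF (t / σ₂) =
      exp (-(((σ₁ ^ 2)⁻¹ - (σ₂ ^ 2)⁻¹) / 2 * t ^ 2)) := by
  rw [stdNormalPDF, stdNormalPDF, div_div_div_cancel_right₀ (by positivity), ← exp_sub]
  congr 1
  field_simp
  ring

lemma strictAntiOn_stdNormalPDF_div_div_stdNormalPDF_div {σ₁ σ₂ : ℝ} (hσ₁ : 0 < σ₁)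
    (hσ₁₂ : σ₁ < σ₂) :
    StrictAntiOn (fun t => stdNormalPDF (t / σ₁) / stdNormalPDF (t / σ₂)) (Ici 0) := by
  have hc : 0 < ((σ₁ ^ 2)⁻¹ - (σ₂ ^ 2)⁻¹) / 2 := by
    have := inv_strictAnti₀ (by positivity) (pow_lt_pow_left₀ hσ₁₂ hσ₁.le two_ne_zero)
    linarith
  intro s hs t ht hst
  simp only [stdNormalPDF_div_div_stdNormalPDF_div hσ₁.ne' (hσ₁.trans hσ₁₂).ne']
  gcongr

theorem truncGauss_survival_strictMono_in_variance_general
    (a b x σ₁ σ₂ : ℝ) (ha : 0 ≤ a) (hax : a < x) (hxb : x < b)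
    (hσ₁ : 0 < σ₁) (hσ₁₂ : σ₁ < σ₂) :
    truncGaussSurvival σ₁ a b x < truncGaussSurvival σ₂ a b x := by
  have hσ₂ : 0 < σ₂ := hσ₁.trans hσ₁₂
  have integrable (σ : ℝ) : IntervalIntegrable (fun t => stdNormalPDF (t / σ)) volume a b :=
    (continuous_stdNormalPDF.comp (continuous_id.div_const σ)).intervalIntegrable a b
  rw [truncGaussSurvival_eq_integral_div hσ₁.ne', truncGaussSurvival_eq_integral_div hσ₂.ne']
  exact integral_div_integral_lt_of_strictAntiOn_div ⟨hax, hxb⟩ (integrable σ₁) (integrable σ₂)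
    (fun _ _ => stdNormalPDF_pos _) (fun _ _ => stdNormalPDF_pos _)
    ((strictAntiOn_stdNormalPDF_div_div_stdNormalPDF_div hσ₁ hσ₁₂).mono
      fun t ht => ha.trans ht.1.le)

theorem truncGauss_survival_strictMono_in_variance
    (a b x σ₁ σ₂ : ℝ) (ha : 0 ≤ a) (hab : a < b) (hax : a < x) (hxb : x < b)
    (hσ₁ : 0 < σ₁) (hσ₁₂ : σ₁ < σ₂) :
    truncGaussSurvival σ₁ a b x < truncGaussSurvival σ₂ a b x :=
  truncGauss_survival_strictMono_in_variance_general a b x σ₁ σ₂ ha hax hxb hσ₁ hσ₁₂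
end

section
/- Let each of d columns contain m i.i.d. draws from the mixture π·N(−B,1) + (1−2π)·N(0,1) + π·N(B,1), independent across columns. Let N_j be the number of draws in column j from the N(B,1) component and N'_j the number from the N(0,1) component. If π^m = 1/d, then the probability that exactly one column j has N_j = m while every other column ℓ has N'_ℓ ≥ m − 2πmd is at least (1 − 1/d)^{d−1}, hence at least approaching 1/e as d → ∞. -/
open MeasureTheory ProbabilityTheory
open scoped ENNReal

/-!
Since `π ≤ 1` and `m ≥ 1`, `π * d ≥ π ^ m * d = 1`, so `m - 2πmd < 0` and the condition on the
`N'_ℓ` holds trivially. The event is then "exactly one column consists only of label `2`". These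
column events are independent, each of probability `π ^ m = 1/d`, so the event has probability
exactly `d · (1/d) · (1 - 1/d)^(d-1)`.
-/

lemma one_le_mul_of_mul_pow_eq_one {d π : ℝ} {m : ℕ} (hd : 0 ≤ d) (hπ0 : 0 ≤ π) (hπ1 : π ≤ 1)
    (hm : m ≠ 0) (h : d * π ^ m = 1) : 1 ≤ d * π :=
  h.symm.le.trans (mul_le_mul_of_nonneg_left (pow_le_of_le_one hπ0 hπ1 hm) hd)

lemma ENNReal.natCast_mul_inv_mul_one_sub_inv_pow {n : ℕ} (hn : n ≠ 0) :
    (n : ℝ≥0∞) * ((n : ℝ≥0∞)⁻¹ * (1 - (n : ℝ≥0∞)⁻¹) ^ (n - 1))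
      = ENNReal.ofReal ((1 - 1 / (n : ℝ)) ^ (n - 1)) := by
  have hn0 : (0 : ℝ) < n := by positivity
  rw [← mul_assoc, ENNReal.mul_inv_cancel (by exact_mod_cast hn) (ENNReal.natCast_ne_top n),
    one_mul, ENNReal.ofReal_pow (sub_nonneg.mpr (div_le_one_of_le₀ (by simp; omega) hn0.le)),
    ENNReal.ofReal_sub _ (by positivity), one_div, ENNReal.ofReal_inv_of_pos hn0,
    ENNReal.ofReal_natCast, ENNReal.ofReal_one]

lemma Set.setOf_existsUnique_mem_eq_iUnion {α ι : Type*} [DecidableEq ι] (A : ι → Set α) :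
    {a | ∃! i, a ∈ A i} = ⋃ j, ⋂ i, if i = j then A i else (A i)ᶜ := by
  ext a
  simp only [Set.mem_ofPred_eq, Set.mem_iUnion, Set.mem_iInter]
  refine ⟨fun ⟨j, hj, huniq⟩ => ⟨j, fun i => ?_⟩, fun ⟨j, hj⟩ => ⟨j, ?_, fun i hi => ?_⟩⟩
  · split_ifs with h
    · exact h ▸ hj
    · exact fun hi => h (huniq i hi)
  · simpa using hj j
  · by_contra h
    exact absurd hi (by simpa [h] using hj i)

namespace ProbabilityTheory

variable {Ω : Type*} [MeasurableSpace Ω] {μ : Measure Ω}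

theorem iIndepSet.measure_existsUnique_mem {ι : Type*} [Fintype ι] {A : ι → Set Ω}
    (hA : ∀ i, MeasurableSet (A i)) (hind : iIndepSet A μ) {p : ℝ≥0∞} (hp : ∀ i, μ (A i) = p) :
    μ {ω | ∃! i, ω ∈ A i} = Fintype.card ι * (p * (1 - p) ^ (Fintype.card ι - 1)) := by
  classical
  have := hind.isProbabilityMeasure
  set E : ι → Set Ω := fun j => ⋂ i, if i = j then A i else (A i)ᶜ
  have hunion : {ω | ∃! i, ω ∈ A i} = ⋃ j, E j := Set.setOf_existsUnique_mem_eq_iUnion A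
  have hdisj : Pairwise (Function.onFun Disjoint E) := by
    intro j k hjk
    refine Set.disjoint_left.mpr fun ω hωj hωk => ?_
    have h1 := Set.mem_iInter.mp hωj j
    have h2 := Set.mem_iInter.mp hωk j
    simp only [if_true, hjk, if_false] at h1 h2
    exact h2 h1
  have hmeasE : ∀ j, MeasurableSet (E j) := fun j =>
    MeasurableSet.iInter fun i => by split_ifs <;> simp [hA i, (hA i).compl]
  have hμE : ∀ j, μ (E j) = p * (1 - p) ^ (Fintype.card ι - 1) := by
    intro j
    rw [((iIndepSet_iff_iIndep _ _).mp hind).meas_iInter fun i => by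
        split_ifs
        · exact MeasurableSpace.measurableSet_generateFrom rfl
        · exact (MeasurableSpace.measurableSet_generateFrom (Set.mem_singleton _)).compl,
      ← Finset.mul_prod_erase _ _ (Finset.mem_univ j), if_pos rfl, hp,
      Finset.prod_congr rfl fun i hi => by
        rw [if_neg (Finset.ne_of_mem_erase hi), prob_compl_eq_one_sub (hA i), hp],
      Finset.prod_const, Finset.card_erase_of_mem (Finset.mem_univ j), Finset.card_univ]
  rw [hunion, measure_iUnion hdisj hmeasE, tsum_fintype, Finset.sum_congr rfl fun j _ => hμE j,
    Finset.sum_const, Finset.card_univ, nsmul_eq_mul]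

variable {ι κ β : Type*} [Fintype κ] [MeasurableSpace β] {L : ι × κ → Ω → β}

theorem iIndepFun.measure_biInter_iInter_preimage (hL : iIndepFun L μ) {s : ι → κ → Set β}
    (hs : ∀ j i, MeasurableSet (s j i)) (T : Finset ι) :
    μ (⋂ j ∈ T, ⋂ i, L (j, i) ⁻¹' s j i) = ∏ j ∈ T, ∏ i, μ (L (j, i) ⁻¹' s j i) := by
  have hprod : (⋂ j ∈ T, ⋂ i, L (j, i) ⁻¹' s j i)
      = ⋂ p ∈ T ×ˢ Finset.univ, L p ⁻¹' s p.1 p.2 := by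
    ext ω
    simp only [Set.mem_iInter, Finset.mem_product, Finset.mem_univ, and_true]
    exact ⟨fun h p hp => h p.1 hp p.2, fun h j hj i => h (j, i) hj⟩
  rw [hprod, hL.meas_biInter fun p _ => ⟨s p.1 p.2, hs p.1 p.2, rfl⟩, Finset.prod_product]

theorem iIndepFun.measure_iInter_preimage (hL : iIndepFun L μ) {s : κ → Set β}
    (hs : ∀ i, MeasurableSet (s i)) (j : ι) :
    μ (⋂ i, L (j, i) ⁻¹' s i) = ∏ i, μ (L (j, i) ⁻¹' s i) := by
  simpa using hL.measure_biInter_iInter_preimage (s := fun _ => s) (fun _ => hs) {j}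

theorem iIndepFun.iIndepSet_iInter_preimage (hL : iIndepFun L μ) (hLm : ∀ p, Measurable (L p))
    {s : ι → κ → Set β} (hs : ∀ j i, MeasurableSet (s j i)) :
    iIndepSet (fun j => ⋂ i, L (j, i) ⁻¹' s j i) μ := by
  rw [iIndepSet_iff_meas_biInter fun j => MeasurableSet.iInter fun i => hLm (j, i) (hs j i)]
  intro T
  rw [hL.measure_biInter_iInter_preimage hs]
  exact Finset.prod_congr rfl fun j _ => (hL.measure_iInter_preimage (hs j) j).symm

end ProbabilityTheory

theorem exactly_one_spiked_column_prob_bound_general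
    (Ω : Type*) [MeasureSpace Ω] [IsProbabilityMeasure (ℙ : Measure Ω)]
    (d m : ℕ) (hd : 1 ≤ d) (hm : 1 ≤ m)
    (π : ℝ) (hπ0 : 0 < π) (hπhalf : π < 1 / 2)
    (hπm : (d : ℝ) * π ^ m = 1)
    -- component labels: 0 ↦ N(-B,1), 1 ↦ N(0,1), 2 ↦ N(B,1)
    (L : Fin d × Fin m → Ω → Fin 3)
    (hmeas : ∀ p, Measurable (L p))
    (hindep : iIndepFun L ℙ)
    (hpos : ∀ p, ℙ {ω | L p ω = 2} = ENNReal.ofReal π)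
    (N N' : Fin d → Ω → ℕ)
    (hN : ∀ j ω, N j ω = (Finset.univ.filter fun i : Fin m => L (j, i) ω = 2).card) :
    ENNReal.ofReal ((1 - 1 / (d : ℝ)) ^ (d - 1)) ≤
      ℙ {ω | ∃! j : Fin d, N j ω = m ∧
        ∀ ℓ : Fin d, ℓ ≠ j → (m : ℝ) - 2 * π * m * d ≤ (N' ℓ ω : ℝ)} := by
  have hd0 : (0 : ℝ) < d := by exact_mod_cast hd
  have hN'_vacuous : ∀ x : ℕ, (m : ℝ) - 2 * π * m * d ≤ x := by
    have hdπ := one_le_mul_of_mul_pow_eq_one hd0.le hπ0.le (by linarith) (by omega) hπm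
    have hm1 : (1 : ℝ) ≤ m := by exact_mod_cast hm
    intro x
    nlinarith [(Nat.cast_nonneg x : (0 : ℝ) ≤ x)]
  set A : Fin d → Set Ω := fun j => ⋂ i, L (j, i) ⁻¹' {2}
  have hNA : ∀ j ω, N j ω = m ↔ ω ∈ A j := fun j ω => by
    simpa [A, hN] using
      Finset.card_filter_eq_iff (s := Finset.univ) (p := fun i : Fin m => L (j, i) ω = 2)
  have hevent : {ω | ∃! j : Fin d, N j ω = m ∧
      ∀ ℓ : Fin d, ℓ ≠ j → (m : ℝ) - 2 * π * m * d ≤ (N' ℓ ω : ℝ)} = {ω | ∃! j, ω ∈ A j} := by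
    ext ω
    exact existsUnique_congr fun j => by simp [hNA, hN'_vacuous]
  have hA : ∀ j, ℙ (A j) = (d : ℝ≥0∞)⁻¹ := fun j => by
    have hcell : ∀ i, ℙ (L (j, i) ⁻¹' {2}) = ENNReal.ofReal π := fun i => hpos (j, i)
    rw [hindep.measure_iInter_preimage (fun _ => measurableSet_singleton 2)]
    simp only [hcell, Finset.prod_const, Finset.card_univ, Fintype.card_fin]
    rw [← ENNReal.ofReal_pow hπ0.le, eq_one_div_of_mul_eq_one_right hπm, one_div,
      ENNReal.ofReal_inv_of_pos hd0, ENNReal.ofReal_natCast]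
  have hAmeas : ∀ j, MeasurableSet (A j) := fun j =>
    MeasurableSet.iInter fun i => hmeas (j, i) (measurableSet_singleton 2)
  rw [hevent, iIndepSet.measure_existsUnique_mem hAmeas
    (hindep.iIndepSet_iInter_preimage hmeas fun _ _ => measurableSet_singleton 2) hA,
    Fintype.card_fin, ENNReal.natCast_mul_inv_mul_one_sub_inv_pow (by omega)]

theorem exactly_one_spiked_column_prob_bound
    (Ω : Type*) [MeasureSpace Ω] [IsProbabilityMeasure (ℙ : Measure Ω)]
    (d m : ℕ) (hd : 1 ≤ d) (hm : 1 ≤ m)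
    (π : ℝ) (hπ0 : 0 < π) (hπhalf : π < 1 / 2)
    (hπm : (d : ℝ) * π ^ m = 1)
    -- component labels: 0 ↦ N(-B,1), 1 ↦ N(0,1), 2 ↦ N(B,1)
    (L : Fin d × Fin m → Ω → Fin 3)
    (hmeas : ∀ p, Measurable (L p))
    (hindep : iIndepFun L ℙ)
    (hneg : ∀ p, ℙ {ω | L p ω = 0} = ENNReal.ofReal π)
    (hmid : ∀ p, ℙ {ω | L p ω = 1} = ENNReal.ofReal (1 - 2 * π))
    (hpos : ∀ p, ℙ {ω | L p ω = 2} = ENNReal.ofReal π)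
    (N N' : Fin d → Ω → ℕ)
    (hN : ∀ j ω, N j ω = (Finset.univ.filter fun i : Fin m => L (j, i) ω = 2).card)
    (hN' : ∀ j ω, N' j ω = (Finset.univ.filter fun i : Fin m => L (j, i) ω = 1).card) :
    ENNReal.ofReal ((1 - 1 / (d : ℝ)) ^ (d - 1)) ≤
      ℙ {ω | ∃! j : Fin d, N j ω = m ∧
        ∀ ℓ : Fin d, ℓ ≠ j → (m : ℝ) - 2 * π * m * d ≤ (N' ℓ ω : ℝ)} :=
  exactly_one_spiked_column_prob_bound_general Ω d m hd hm π hπ0 hπhalf hπm L hmeas hindep hpos N N'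
    hN
end
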